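/- arXiv:1703.07247 — 5 statements merged into one kernel-verified Lean document; each statement's English description precedes it below -/
import Mathlib

section
/- Let (V,E) be a graph, L a laminar family on V, and b ∈ N^L. Suppose for every S ∈ L there is no edge of E between two distinct children of S in L, and suppose the system {x(δ(S)) = b_S : S ∈ L} (one equation per S, over variables indexed by E) has a unique solution x* with 0 < x*_e < 1 for all e ∈ E. Then x*_e = 1/2 for all e ∈ E, and moreover each endpoint of every edge e ∈ E belongs to some set S ∈ L. -/
/-- `C` is a child of `S` in the laminar family `L`: a maximal member of `L` properly
contained in `S`. -/
def IsChild {V : Type*} [DecidableEq V] (L : Finset (Finset V)) (C S : Finset V) : Prop :=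
  C ∈ L ∧ C ⊂ S ∧ ∀ T ∈ L, C ⊂ T → ¬ T ⊂ S

/-- `δ(S)`: the set of edges (given by endpoint maps `ep1, ep2`) with exactly one endpoint
in `S`. -/
def cutEdges {V E : Type*} [Fintype E] [DecidableEq V] (ep1 ep2 : E → V) (S : Finset V) :
    Finset E :=
  Finset.univ.filter fun e => (ep1 e ∈ S ∧ ep2 e ∉ S) ∨ (ep1 e ∉ S ∧ ep2 e ∈ S)


/-!
Uniqueness of `x*` means that the cut vectors `χ(δ(S))`, `S ∈ L`, span `ℝ^E`, so for each edge `f`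
there are weights `c` on `L` with `∑ c_S χ(δ(S)) = 𝟙_f`, and then `x*_f = ∑ c_S b_S`. Encode `c` by
its potential `π(w) = ∑_{S ∋ w} c_S`. As no edge joins two children, the coefficient of an edge
`pq` in `∑ c_S χ(δ(S))` is `π(p) + π(q)`, `π(q) - π(p)` or `π(p) - π(q)`, so the condition on `c`
is a system of equations `±π(p) ± π(q) = r` with `r ∈ {0, 1}`. A map `φ : ℝ → ℝ` fixing `0` and
commuting with the maps `y ↦ ±y + r` sends solutions to solutions, and by laminarity (Möbius
inversion along the chains of `L`) `φ ∘ π` is again the potential of weights, now with values in the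
group generated by the values of `φ`. Replacing each nonzero fractional part by `1/2` gives
half-integral weights, so `x*_f ∈ ½ℤ ∩ (0, 1)`. If an endpoint of `f` lies in no member of `L`, then
`π` is an integer at both endpoints of `f`, so keeping integer values and sending the others to `0`
still solves the system; the resulting integral weights would make `x*_f` an integer.
-/

open Finset

theorem Finset.exists_sum_filter_le_eq {α M : Type*} [PartialOrder α] [DecidableLE α]
    [AddCommGroup M] (L : Finset α) (H : α → M) :
    ∃ d : α → M, (∀ S ∈ L, ∑ T ∈ L with S ≤ T, d T = H S) ∧
      ∀ S, d S ∈ AddSubgroup.closure (Set.range H) := by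
  classical
  induction L using Finset.strongInduction with
  | H L ih =>
    rcases L.eq_empty_or_nonempty with rfl | hL
    · exact ⟨0, by simp, fun _ => zero_mem _⟩
    -- A minimal member `m` lies above no other member, so only its own equation involves `d m`.
    obtain ⟨m, hmL, hmin⟩ := L.exists_minimal hL
    obtain ⟨d, hd, hdH⟩ := ih (L.erase m) (erase_ssubset hmL)
    have hm : m ∉ L.erase m := notMem_erase m L
    set dm := H m - ∑ T ∈ L.erase m with m ≤ T, d T
    have hupd : ∀ T ∈ L.erase m, Function.update d m dm T = d T := fun T hT =>
      Function.update_of_ne (ne_of_mem_of_not_mem hT hm) _ _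
    refine ⟨Function.update d m dm, fun S hS => ?_, fun S => ?_⟩
    · rw [← insert_erase hmL, filter_insert]
      by_cases hSm : S = m
      · subst hSm
        rw [if_pos le_rfl, sum_insert (by simp [hm]), Function.update_self,
          sum_congr rfl fun T hT => hupd T (mem_filter.1 hT).1]
        exact sub_add_cancel _ _
      · have hS' : S ∈ L.erase m := mem_erase.2 ⟨hSm, hS⟩
        rw [if_neg fun hle => hSm (le_antisymm hle (hmin hS hle)),
          sum_congr rfl fun T hT => hupd T (mem_filter.1 hT).1, hd S hS']
    · rcases eq_or_ne S m with rfl | hSm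
      · rw [Function.update_self]
        exact sub_mem (AddSubgroup.subset_closure ⟨S, rfl⟩) (sum_mem fun T _ => hdH T)
      · rw [Function.update_of_ne hSm]
        exact hdH S

section Laminar

variable {V : Type*}

def IsLaminar (L : Finset (Finset V)) : Prop :=
  ∀ S ∈ L, ∀ T ∈ L, S ⊆ T ∨ T ⊆ S ∨ Disjoint S T

theorem IsLaminar.ssubset_of_mem_of_notMem {L : Finset (Finset V)} (hlam : IsLaminar L)
    {A T : Finset V} (hT : T ∈ L) (hA : A ∈ L) {p q : V} (hpT : p ∈ T) (hqT : q ∉ T)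
    (hpA : p ∈ A) (hqA : q ∈ A) : T ⊂ A := by
  rcases hlam T hT A hA with hTA | hAT | hdisj
  · exact Finset.ssubset_iff_subset_ne.2 ⟨hTA, by rintro rfl; exact hqT hqA⟩
  · exact absurd (hAT hqA) hqT
  · exact absurd hpA (disjoint_left.1 hdisj hpT)

variable [DecidableEq V]

def NoEdgeBetweenChildren {E : Type*} (ep1 ep2 : E → V) (L : Finset (Finset V)) : Prop :=
  ∀ S ∈ L, ∀ C1 C2 : Finset V, IsChild L C1 S → IsChild L C2 S → C1 ≠ C2 →
    ∀ e : E, ¬ (ep1 e ∈ C1 ∧ ep2 e ∈ C2) ∧ ¬ (ep1 e ∈ C2 ∧ ep2 e ∈ C1)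

def potential (L : Finset (Finset V)) (d : Finset V → ℝ) (w : V) : ℝ :=
  ∑ S ∈ L with w ∈ S, d S

variable {L : Finset (Finset V)}

theorem potential_eq_zero {w : V} (hw : ¬ ∃ S ∈ L, w ∈ S) (d : Finset V → ℝ) :
    potential L d w = 0 := by
  rw [potential, filter_false_of_mem fun S hS hwS => hw ⟨S, hS, hwS⟩, sum_empty]

theorem IsLaminar.exists_filter_mem_eq_filter_le (hlam : IsLaminar L) {w : V}
    (hw : ∃ S ∈ L, w ∈ S) : ∃ M ∈ L, {S ∈ L | w ∈ S} = {S ∈ L | M ≤ S} := by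
  obtain ⟨M, hM, hmin⟩ :=
    exists_minimal (s := {S ∈ L | w ∈ S}) (by simpa [Finset.Nonempty] using hw)
  rw [mem_filter] at hM
  refine ⟨M, hM.1, filter_congr fun S hS => ⟨fun hwS => ?_, fun hMS => hMS hM.2⟩⟩
  rcases hlam M hM.1 S hS with hMS | hSM | hdisj
  · exact hMS
  · exact hmin (mem_filter.2 ⟨hS, hwS⟩) hSM
  · exact absurd hwS (disjoint_left.1 hdisj hM.2)

theorem IsLaminar.exists_potential_eq_comp (hlam : IsLaminar L) (c : Finset V → ℝ)
    {φ : ℝ → ℝ} {A : AddSubgroup ℝ} (hφ0 : φ 0 = 0) (hφA : ∀ y, φ y ∈ A) :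
    ∃ d : Finset V → ℝ, (∀ w, potential L d w = φ (potential L c w)) ∧ ∀ S, d S ∈ A := by
  obtain ⟨d, hd, hdφ⟩ := L.exists_sum_filter_le_eq fun S => φ (∑ T ∈ L with S ≤ T, c T)
  refine ⟨d, fun w => ?_, fun S =>
    (AddSubgroup.closure_le A).2 (Set.range_subset_iff.2 fun _ => hφA _) (hdφ S)⟩
  by_cases hw : ∃ S ∈ L, w ∈ S
  · obtain ⟨M, hM, hchain⟩ := hlam.exists_filter_mem_eq_filter_le hw
    rw [potential, potential, hchain, hd M hM]
  · rw [potential_eq_zero hw, potential_eq_zero hw, hφ0]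

theorem exists_isChild_mem {A T : Finset V} (hT : T ∈ L) (hTA : T ⊂ A) {w : V} (hw : w ∈ T) :
    ∃ C, IsChild L C A ∧ w ∈ C := by
  obtain ⟨C, -, hC, hmax⟩ :=
    exists_le_maximal {C ∈ L | w ∈ C ∧ C ⊂ A} (mem_filter.2 ⟨hT, hw, hTA⟩)
  obtain ⟨hCL, hwC, hCA⟩ := mem_filter.1 hC
  exact ⟨C, ⟨hCL, hCA, fun U hU hCU hUA =>
    hCU.not_subset (hmax (mem_filter.2 ⟨hU, hCU.subset hwC, hUA⟩) hCU.subset)⟩, hwC⟩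

theorem edge_trichotomy {E : Type*} {ep1 ep2 : E → V} (hlam : IsLaminar L)
    (hnochild : NoEdgeBetweenChildren ep1 ep2 L) (g : E) :
    (∀ S ∈ L, ep1 g ∈ S → ep2 g ∉ S) ∨ (∀ S ∈ L, ep1 g ∈ S → ep2 g ∈ S) ∨
      (∀ S ∈ L, ep2 g ∈ S → ep1 g ∈ S) := by
  -- Otherwise the endpoints lie in different children of the smallest member containing both.
  by_contra! h
  obtain ⟨⟨S, hS, hpS, hqS⟩, ⟨Tp, hTp, hpTp, hqTp⟩, ⟨Tq, hTq, hqTq, hpTq⟩⟩ := h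
  obtain ⟨A, hA, hmin⟩ := exists_minimal (s := {A ∈ L | ep1 g ∈ A ∧ ep2 g ∈ A})
    ⟨S, mem_filter.2 ⟨hS, hpS, hqS⟩⟩
  obtain ⟨hAL, hpA, hqA⟩ := mem_filter.1 hA
  obtain ⟨C1, hC1, hpC1⟩ :=
    exists_isChild_mem hTp (hlam.ssubset_of_mem_of_notMem hTp hAL hpTp hqTp hpA hqA) hpTp
  obtain ⟨C2, hC2, hqC2⟩ :=
    exists_isChild_mem hTq (hlam.ssubset_of_mem_of_notMem hTq hAL hqTq hpTq hqA hpA) hqTq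
  have hC12 : C1 ≠ C2 := by
    rintro rfl
    exact hC1.2.1.not_subset (hmin (mem_filter.2 ⟨hC1.1, hpC1, hqC2⟩) hC1.2.1.subset)
  exact (hnochild A hAL C1 C2 hC1 hC2 hC12 g).1 ⟨hpC1, hqC2⟩

end Laminar

section Cuts

variable {V E : Type*} [DecidableEq V] {ep1 ep2 : E → V} {L : Finset (Finset V)}

variable (ep1 ep2 L) in
/-- The coefficient of `g` in `∑ S ∈ L, d S • χ(δ(S))`; membership in `cutEdges ep1 ep2 S` is
spelled out, as testing it would need `DecidableEq E`. -/
def cutCoeff (d : Finset V → ℝ) (g : E) : ℝ :=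
  ∑ S ∈ L with (ep1 g ∈ S ∧ ep2 g ∉ S) ∨ (ep1 g ∉ S ∧ ep2 g ∈ S), d S

theorem sum_mul_sum_cutEdges [Fintype E] (d : Finset V → ℝ) (y : E → ℝ) :
    ∑ S ∈ L, d S * ∑ e ∈ cutEdges ep1 ep2 S, y e = ∑ g, y g * cutCoeff ep1 ep2 L d g := by
  simp only [cutCoeff, cutEdges, sum_filter, mul_sum]
  rw [sum_comm]
  refine sum_congr rfl fun g _ => sum_congr rfl fun S _ => ?_
  split_ifs <;> ring

theorem exists_cutCoeff_eq_single [Fintype E] [DecidableEq E]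
    (hinj : ∀ z : E → ℝ, (∀ S ∈ L, ∑ e ∈ cutEdges ep1 ep2 S, z e = 0) → z = 0) (f : E) :
    ∃ c : Finset V → ℝ, ∀ g, cutCoeff ep1 ep2 L c g = if g = f then 1 else 0 := by
  let A : (E → ℝ) →ₗ[ℝ] (L → ℝ) :=
    LinearMap.pi fun S => ∑ e ∈ cutEdges ep1 ep2 S.1, LinearMap.proj e
  have hA : Function.Injective A := by
    rw [← LinearMap.ker_eq_bot, LinearMap.ker_eq_bot']
    intro z hz
    exact hinj z fun S hS => by simpa [A] using congrFun hz ⟨S, hS⟩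
  obtain ⟨ψ, hψ⟩ := LinearMap.dualMap_surjective_of_injective hA (LinearMap.proj f)
  set c : Finset V → ℝ := fun S =>
    if h : S ∈ L then ψ (fun T => if ⟨S, h⟩ = T then 1 else 0) else 0
  have hrep : ∀ z : E → ℝ, z f = ∑ g, z g * cutCoeff ep1 ep2 L c g := by
    intro z
    have h := LinearMap.congr_fun hψ z
    rw [LinearMap.dualMap_apply, LinearMap.proj_apply, LinearMap.pi_apply_eq_sum_univ] at h
    rw [← h, ← sum_mul_sum_cutEdges, ← sum_coe_sort L]
    refine sum_congr rfl fun S _ => ?_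
    simp [A, c, mul_comm]
  refine ⟨c, fun g => ?_⟩
  simpa [Pi.single_apply, eq_comm] using (hrep (Pi.single g 1)).symm

theorem cutCoeff_cases (hlam : IsLaminar L) (hnochild : NoEdgeBetweenChildren ep1 ep2 L)
    (g : E) :
    (∀ d, cutCoeff ep1 ep2 L d g = potential L d (ep1 g) + potential L d (ep2 g)) ∨
    (∀ d, cutCoeff ep1 ep2 L d g = potential L d (ep2 g) - potential L d (ep1 g)) ∨
    (∀ d, cutCoeff ep1 ep2 L d g = potential L d (ep1 g) - potential L d (ep2 g)) := by
  rcases edge_trichotomy hlam hnochild g with h | h | h <;>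
    [left; (right; left); (right; right)] <;>
  · intro d
    simp only [cutCoeff, potential, sum_filter, ← sum_add_distrib, ← sum_sub_distrib]
    refine sum_congr rfl fun S hS => ?_
    have := h S hS
    by_cases ep1 g ∈ S <;> by_cases ep2 g ∈ S <;> simp_all

/-- The three ways in which an edge equation `±π(p) ± π(q) = r` expresses `π(q)` through
`y = π(p)`. -/
def CommutesAt (φ : ℝ → ℝ) (r y : ℝ) : Prop :=
  φ (r - y) = r - φ y ∧ φ (y + r) = φ y + r ∧ φ (y - r) = φ y - r

theorem cutCoeff_eq_of_potential_eq_comp (hlam : IsLaminar L)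
    (hnochild : NoEdgeBetweenChildren ep1 ep2 L) {c d : Finset V → ℝ} {φ : ℝ → ℝ}
    (hd : ∀ w, potential L d w = φ (potential L c w)) (g : E)
    (hφ : CommutesAt φ (cutCoeff ep1 ep2 L c g) (potential L c (ep1 g))) :
    cutCoeff ep1 ep2 L d g = cutCoeff ep1 ep2 L c g := by
  obtain ⟨hsub, hadd, hsub'⟩ := hφ
  rcases cutCoeff_cases hlam hnochild g with h | h | h <;> rw [h d, hd, hd]
  · rw [show potential L c (ep2 g) = cutCoeff ep1 ep2 L c g - potential L c (ep1 g) by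
      linarith [h c], hsub]
    ring
  · rw [show potential L c (ep2 g) = potential L c (ep1 g) + cutCoeff ep1 ep2 L c g by
      linarith [h c], hadd]
    ring
  · rw [show potential L c (ep2 g) = potential L c (ep1 g) - cutCoeff ep1 ep2 L c g by
      linarith [h c], hsub']
    ring

theorem potential_mem_range_intCast (hlam : IsLaminar L)
    (hnochild : NoEdgeBetweenChildren ep1 ep2 L) {c : Finset V → ℝ} {g : E}
    (hr : cutCoeff ep1 ep2 L c g ∈ Set.range ((↑) : ℤ → ℝ))
    (hcov : ¬ ((∃ S ∈ L, ep1 g ∈ S) ∧ (∃ S ∈ L, ep2 g ∈ S))) :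
    potential L c (ep1 g) ∈ Set.range ((↑) : ℤ → ℝ) := by
  obtain ⟨n, hn⟩ := hr
  rcases not_and_or.1 hcov with h | h
  · exact ⟨0, by rw [potential_eq_zero h, Int.cast_zero]⟩
  · rcases cutCoeff_cases hlam hnochild g with hc | hc | hc <;>
      rw [hc c, potential_eq_zero h] at hn
    exacts [⟨n, by rw [hn, add_zero]⟩, ⟨-n, by rw [Int.cast_neg, hn, zero_sub, neg_neg]⟩,
      ⟨n, by rw [hn, sub_zero]⟩]

theorem solution_mem_of_commutesAt [Fintype E] [DecidableEq E] (hlam : IsLaminar L)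
    (hnochild : NoEdgeBetweenChildren ep1 ep2 L) {b : Finset V → ℕ} {xs : E → ℝ}
    (heq : ∀ S ∈ L, ∑ e ∈ cutEdges ep1 ep2 S, xs e = (b S : ℝ)) {f : E} {c : Finset V → ℝ}
    (hc : ∀ g, cutCoeff ep1 ep2 L c g = if g = f then 1 else 0) {φ : ℝ → ℝ}
    {A : AddSubgroup ℝ} (hφ0 : φ 0 = 0) (hφA : ∀ y, φ y ∈ A)
    (hφ : ∀ g, CommutesAt φ (cutCoeff ep1 ep2 L c g) (potential L c (ep1 g))) : xs f ∈ A := by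
  obtain ⟨d, hd, hdA⟩ := hlam.exists_potential_eq_comp c hφ0 hφA
  have hdf : ∀ g, cutCoeff ep1 ep2 L d g = if g = f then 1 else 0 := fun g =>
    (cutCoeff_eq_of_potential_eq_comp hlam hnochild hd g (hφ g)).trans (hc g)
  have hxs : xs f = ∑ S ∈ L, d S * b S := by
    rw [← sum_congr rfl fun S hS => congrArg (d S * ·) (heq S hS), sum_mul_sum_cutEdges]
    simp [hdf]
  rw [hxs]
  exact sum_mem fun S _ => by
    rw [mul_comm, ← nsmul_eq_mul]
    exact AddSubgroup.nsmul_mem A (hdA S) _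

end Cuts

/-- Sending non-integers to the midpoint of their unit interval, rather than rounding them, makes
this map odd. -/
noncomputable def halfRound (y : ℝ) : ℝ :=
  if Int.fract y = 0 then y else ⌊y⌋ + 1 / 2

theorem halfRound_add_intCast (y : ℝ) (n : ℤ) : halfRound (y + n) = halfRound y + n := by
  simp only [halfRound, Int.fract_add_intCast, Int.floor_add_intCast]
  split_ifs <;> push_cast <;> ring

theorem halfRound_neg (y : ℝ) : halfRound (-y) = -halfRound y := by
  unfold halfRound
  by_cases h : Int.fract y = 0
  · rw [if_pos h, if_pos (Int.fract_neg_eq_zero.2 h)]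
  · rw [if_neg h, if_neg (mt Int.fract_neg_eq_zero.1 h), Int.floor_neg, Int.cast_neg,
      Int.ceil_eq_add_one_sub_fract h, Int.fract]
    ring

theorem commutesAt_halfRound {r : ℝ} (hr : r ∈ Set.range ((↑) : ℤ → ℝ)) (y : ℝ) :
    CommutesAt halfRound r y := by
  obtain ⟨n, rfl⟩ := hr
  refine ⟨?_, halfRound_add_intCast y n, ?_⟩
  · rw [sub_eq_neg_add, halfRound_add_intCast, halfRound_neg, neg_add_eq_sub]
  · rw [sub_eq_add_neg, ← Int.cast_neg, halfRound_add_intCast, Int.cast_neg, ← sub_eq_add_neg]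

theorem halfRound_mem_zmultiples (y : ℝ) : halfRound y ∈ AddSubgroup.zmultiples (1 / 2 : ℝ) := by
  rw [AddSubgroup.mem_zmultiples_iff]
  unfold halfRound
  split_ifs with h
  · obtain ⟨n, rfl⟩ := Int.fract_eq_zero_iff.1 h
    exact ⟨2 * n, by simp; ring⟩
  · exact ⟨2 * ⌊y⌋ + 1, by simp; ring⟩

noncomputable def intOrZero (y : ℝ) : ℝ :=
  if Int.fract y = 0 then y else 0

theorem intOrZero_neg (y : ℝ) : intOrZero (-y) = -intOrZero y := by
  simp only [intOrZero, Int.fract_neg_eq_zero]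
  split_ifs <;> simp

theorem intOrZero_of_mem {y : ℝ} (hy : y ∈ Set.range ((↑) : ℤ → ℝ)) : intOrZero y = y :=
  if_pos (Int.fract_eq_zero_iff.2 hy)

theorem commutesAt_intOrZero_zero (y : ℝ) : CommutesAt intOrZero 0 y := by
  simp [CommutesAt, intOrZero_neg]

theorem commutesAt_intOrZero {r y : ℝ} (hr : r ∈ Set.range ((↑) : ℤ → ℝ))
    (hy : y ∈ Set.range ((↑) : ℤ → ℝ)) : CommutesAt intOrZero r y := by
  obtain ⟨n, rfl⟩ := hr
  obtain ⟨m, rfl⟩ := hy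
  simp only [CommutesAt, intOrZero_of_mem ⟨m, rfl⟩]
  exact ⟨intOrZero_of_mem ⟨n - m, Int.cast_sub n m⟩, intOrZero_of_mem ⟨m + n, Int.cast_add m n⟩,
    intOrZero_of_mem ⟨m - n, Int.cast_sub m n⟩⟩

theorem intOrZero_mem_zmultiples (y : ℝ) : intOrZero y ∈ AddSubgroup.zmultiples (1 : ℝ) := by
  unfold intOrZero
  split_ifs with h
  · obtain ⟨n, rfl⟩ := Int.fract_eq_zero_iff.1 h
    exact ⟨n, by simp⟩
  · exact zero_mem _

theorem eq_half_of_mem_zmultiples {x : ℝ} (h0 : 0 < x) (h1 : x < 1)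
    (hx : x ∈ AddSubgroup.zmultiples (1 / 2 : ℝ)) : x = 1 / 2 := by
  obtain ⟨k, rfl⟩ := AddSubgroup.mem_zmultiples_iff.1 hx
  rw [zsmul_eq_mul] at h0 h1 ⊢
  obtain rfl : k = 1 := by
    have : 0 < k := by exact_mod_cast (by linarith : (0 : ℝ) < k)
    have : k < 2 := by exact_mod_cast (by linarith : (k : ℝ) < 2)
    omega
  rw [Int.cast_one, one_mul]

theorem notMem_zmultiples_one {x : ℝ} (h0 : 0 < x) (h1 : x < 1) :
    x ∉ AddSubgroup.zmultiples (1 : ℝ) := by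
  intro hx
  obtain ⟨k, rfl⟩ := AddSubgroup.mem_zmultiples_iff.1 hx
  rw [zsmul_eq_mul, mul_one] at h0 h1
  have := Int.cast_pos.1 h0
  have : k < 1 := by exact_mod_cast h1
  omega

/-- Half-integrality lemma: if `L` is laminar, no edge joins two distinct children of any
`S ∈ L`, and the system `{x(δ(S)) = b_S : S ∈ L}` has a unique solution `x*` with
`0 < x* < 1`, then `x*_e = 1/2` for every edge `e`, and each endpoint of every edge lies in
some member of `L`. -/
theorem stmt_5 {V E : Type*} [Fintype E] [DecidableEq V]
    (ep1 ep2 : E → V) (L : Finset (Finset V))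
    (hlam : ∀ S ∈ L, ∀ T ∈ L, S ⊆ T ∨ T ⊆ S ∨ Disjoint S T)
    (b : Finset V → ℕ)
    (hnochild : ∀ S ∈ L, ∀ C1 C2 : Finset V, IsChild L C1 S → IsChild L C2 S → C1 ≠ C2 →
      ∀ e : E, ¬ (ep1 e ∈ C1 ∧ ep2 e ∈ C2) ∧ ¬ (ep1 e ∈ C2 ∧ ep2 e ∈ C1))
    (xs : E → ℝ)
    (hbounds : ∀ e, 0 < xs e ∧ xs e < 1)
    (heq : ∀ S ∈ L, ∑ e ∈ cutEdges ep1 ep2 S, xs e = (b S : ℝ))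
    (huniq : ∀ y : E → ℝ, (∀ S ∈ L, ∑ e ∈ cutEdges ep1 ep2 S, y e = (b S : ℝ)) → y = xs) :
    (∀ e, xs e = 1/2) ∧
    (∀ e : E, (∃ S ∈ L, ep1 e ∈ S) ∧ (∃ S ∈ L, ep2 e ∈ S)) := by
  classical
  have hinj (z : E → ℝ) (hz : ∀ S ∈ L, ∑ e ∈ cutEdges ep1 ep2 S, z e = 0) : z = 0 := by
    simpa using huniq (xs + z) fun S hS => by simp [sum_add_distrib, heq S hS, hz S hS]
  have hf (f : E) : xs f = 1 / 2 ∧ (∃ S ∈ L, ep1 f ∈ S) ∧ (∃ S ∈ L, ep2 f ∈ S) := by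
    obtain ⟨c, hc⟩ := exists_cutCoeff_eq_single hinj f
    have hr (g : E) : cutCoeff ep1 ep2 L c g ∈ Set.range ((↑) : ℤ → ℝ) := by
      rw [hc]
      split_ifs
      exacts [⟨1, Int.cast_one⟩, ⟨0, Int.cast_zero⟩]
    refine ⟨eq_half_of_mem_zmultiples (hbounds f).1 (hbounds f).2 <|
      solution_mem_of_commutesAt hlam hnochild heq hc (by simp [halfRound]) halfRound_mem_zmultiples
        fun g => commutesAt_halfRound (hr g) _, ?_⟩
    by_contra hcov
    refine notMem_zmultiples_one (hbounds f).1 (hbounds f).2 <|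
      solution_mem_of_commutesAt hlam hnochild heq hc (by simp [intOrZero]) intOrZero_mem_zmultiples
        fun g => ?_
    by_cases hg : g = f
    · subst hg
      exact commutesAt_intOrZero (hr g) (potential_mem_range_intCast hlam hnochild (hr g) hcov)
    · rw [hc, if_neg hg]
      exact commutesAt_intOrZero_zero _
  exact ⟨fun e => (hf e).1, fun e => (hf e).2⟩
end

section
/- For any k ≥ 3 and nonnegative reals x_0,...,x_{k-1} forming a cycle with c_0,...,c_{k-1} ≥ 0, letting a_i = c_{i-1} − c_i + c_{i+1} (indices mod k), it holds that Σ_{i=0}^{k-1} c_i x_i ≥ 3 · min_{0≤i≤k-1} a_i x_i. -/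
/-- For `k ≥ 3` and nonnegative reals `c_i, x_i` indexed cyclically (mod `k`),
with `a_i = c_{i-1} - c_i + c_{i+1}`, one has `∑ c_i x_i ≥ 3 ⋅ min_i a_i x_i`. -/
theorem stmt_11 (k : ℕ) [NeZero k] (hk : 3 ≤ k) (c x : ZMod k → ℝ)
    (hc : ∀ i, 0 ≤ c i) (hx : ∀ i, 0 ≤ x i) :
    ∑ i, c i * x i ≥
      3 * Finset.univ.inf' ⟨0, Finset.mem_univ 0⟩
        (fun i => (c (i - 1) - c i + c (i + 1)) * x i) := by
  set m := Finset.univ.inf' ⟨0, Finset.mem_univ 0⟩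
      (fun i => (c (i - 1) - c i + c (i + 1)) * x i) with hm
  have hS0 : 0 ≤ ∑ i, c i * x i :=
    Finset.sum_nonneg fun i _ => mul_nonneg (hc i) (hx i)
  rcases le_or_gt m 0 with hm0 | hm0
  · have : 3 * m ≤ 0 := by linarith
    linarith
  -- now m > 0
  have hinf : ∀ v : ZMod k, m ≤ (c (v - 1) - c v + c (v + 1)) * x v := fun v =>
    Finset.inf'_le _ (Finset.mem_univ v)
  have hcard : Fintype.card (ZMod k) = k := ZMod.card k
  -- basic facts about 1 and 2 in ZMod k
  have h1k : (1 : ZMod k) ≠ 0 := by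
    intro h
    have h2 : ((1 : ℕ) : ZMod k) = 0 := by exact_mod_cast h
    have h3 := Nat.le_of_dvd one_pos ((ZMod.natCast_eq_zero_iff 1 k).mp h2)
    omega
  have h2k : (2 : ZMod k) ≠ 0 := by
    intro h
    have h2 : ((2 : ℕ) : ZMod k) = 0 := by exact_mod_cast h
    have h3 := Nat.le_of_dvd two_pos ((ZMod.natCast_eq_zero_iff 2 k).mp h2)
    omega
  have hvm : ∀ v : ZMod k, v - 1 ≠ v := by
    intro v h
    exact h1k (by linear_combination -h)
  have hvp : ∀ v : ZMod k, v + 1 ≠ v := by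
    intro v h
    exact h1k (by linear_combination h)
  have hvmp : ∀ v : ZMod k, v - 1 ≠ v + 1 := by
    intro v h
    exact h2k (by linear_combination -h)
  -- choose p, q, r : the three indices with the largest costs
  obtain ⟨p, -, hp'⟩ := Finset.exists_max_image Finset.univ c ⟨0, Finset.mem_univ 0⟩
  have hcp : ∀ s, c s ≤ c p := fun s => hp' s (Finset.mem_univ s)
  have hne1 : (Finset.univ.erase p).Nonempty := by
    rw [← Finset.card_pos, Finset.card_erase_of_mem (Finset.mem_univ p),
      Finset.card_univ, hcard]
    omega
  obtain ⟨q, hqmem, hq'⟩ := Finset.exists_max_image _ c hne1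
  have hqp : q ≠ p := Finset.ne_of_mem_erase hqmem
  have hcq : ∀ s, s ≠ p → c s ≤ c q := fun s hs =>
    hq' s (Finset.mem_erase.mpr ⟨hs, Finset.mem_univ s⟩)
  have hne2 : ((Finset.univ.erase p).erase q).Nonempty := by
    rw [← Finset.card_pos, Finset.card_erase_of_mem hqmem,
      Finset.card_erase_of_mem (Finset.mem_univ p), Finset.card_univ, hcard]
    omega
  obtain ⟨r, hrmem, hr'⟩ := Finset.exists_max_image _ c hne2
  have hrq : r ≠ q := Finset.ne_of_mem_erase hrmem
  have hrp : r ≠ p := Finset.ne_of_mem_erase (Finset.mem_of_mem_erase hrmem)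
  have hcr : ∀ s, s ≠ p → s ≠ q → c s ≤ c r := fun s hs1 hs2 =>
    hr' s (Finset.mem_erase.mpr ⟨hs2, Finset.mem_erase.mpr ⟨hs1, Finset.mem_univ s⟩⟩)
  have hcrq : c r ≤ c q := hcq r hrp
  have hcqp : c q ≤ c p := hcp q
  -- pair bounds
  have pairP : ∀ s t : ZMod k, s ≠ t → s ≠ p → t ≠ p → c s + c t ≤ c q + c r := by
    intro s t hst hs ht
    by_cases h1 : s = q
    · have : c t ≤ c r := hcr t ht (fun h => hst (by rw [h1, h]))
      rw [h1]; linarith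
    · by_cases h2 : t = q
      · have : c s ≤ c r := hcr s hs h1
        rw [h2]; linarith
      · have := hcr s hs h1
        have := hcr t ht h2
        linarith
  have pairQ : ∀ s t : ZMod k, s ≠ t → s ≠ q → t ≠ q → c s + c t ≤ c p + c r := by
    intro s t hst hs ht
    by_cases h1 : s = p
    · have : c t ≤ c r := hcr t (fun h => hst (by rw [h1, h])) ht
      rw [h1]; linarith
    · by_cases h2 : t = p
      · have : c s ≤ c r := hcr s h1 hs
        rw [h2]; linarith
      · have := hcr s h1 hs
        have := hcp t
        linarith
  have pairR : ∀ s t : ZMod k, s ≠ t → c s + c t ≤ c p + c q := by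
    intro s t hst
    by_cases h1 : s = p
    · have : c t ≤ c q := hcq t (fun h => hst (by rw [h1, h]))
      rw [h1]; linarith
    · have := hcq s h1
      have := hcp t
      linarith
  -- the three key inequalities
  have h1 : m ≤ (c q + c r - c p) * x p := by
    have hb : c (p - 1) + c (p + 1) ≤ c q + c r :=
      pairP _ _ (hvmp p) (hvm p) (hvp p)
    refine (hinf p).trans (mul_le_mul_of_nonneg_right (by linarith) (hx p))
  have h2 : m ≤ (c p + c r - c q) * x q := by
    have hb : c (q - 1) + c (q + 1) ≤ c p + c r :=
      pairQ _ _ (hvmp q) (hvm q) (hvp q)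
    refine (hinf q).trans (mul_le_mul_of_nonneg_right (by linarith) (hx q))
  have h3 : m ≤ (c p + c q - c r) * x r := by
    have hb : c (r - 1) + c (r + 1) ≤ c p + c q :=
      pairR _ _ (hvmp r)
    refine (hinf r).trans (mul_le_mul_of_nonneg_right (by linarith) (hx r))
  -- positivity of x p, x q, x r
  have hxp : 0 < x p := by
    rcases (hx p).lt_or_eq with h | h
    · exact h
    · exfalso; rw [← h, mul_zero] at h1; linarith
  have hxq : 0 < x q := by
    rcases (hx q).lt_or_eq with h | h
    · exact h
    · exfalso; rw [← h, mul_zero] at h2; linarith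
  have hxr : 0 < x r := by
    rcases (hx r).lt_or_eq with h | h
    · exact h
    · exfalso; rw [← h, mul_zero] at h3; linarith
  -- the sum over {p, q, r} bounds the total sum from below
  have hsub3 : c p * x p + c q * x q + c r * x r ≤ ∑ i, c i * x i := by
    have hpe : p ∉ ({q, r} : Finset (ZMod k)) := by
      simp only [Finset.mem_insert, Finset.mem_singleton]
      push_neg
      exact ⟨fun h => hqp h.symm, fun h => hrp h.symm⟩
    have hqr : q ≠ r := fun h => hrq h.symm
    calc c p * x p + c q * x q + c r * x r
        = ∑ i ∈ ({p, q, r} : Finset (ZMod k)), c i * x i := by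
          rw [Finset.sum_insert hpe, Finset.sum_pair hqr]; ring
      _ ≤ ∑ i, c i * x i :=
          Finset.sum_le_sum_of_subset_of_nonneg (Finset.subset_univ _)
            (fun i _ _ => mul_nonneg (hc i) (hx i))
  -- final polynomial computation
  have hposx : (0 : ℝ) < x p * x q * x r := by positivity
  have key : 3 * m * (x p * x q * x r) ≤
      (c p * x p + c q * x q + c r * x r) * (x p * x q * x r) := by
    have t1 := mul_le_mul_of_nonneg_right h1
      (show (0:ℝ) ≤ (x q + x r) * (x q * x r) by positivity)
    have t2 := mul_le_mul_of_nonneg_right h2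
      (show (0:ℝ) ≤ (x p + x r) * (x p * x r) by positivity)
    have t3 := mul_le_mul_of_nonneg_right h3
      (show (0:ℝ) ≤ (x p + x q) * (x p * x q) by positivity)
    nlinarith [mul_nonneg (mul_nonneg hm0.le (hx r)) (sq_nonneg (x p - x q)),
      mul_nonneg (mul_nonneg hm0.le (hx q)) (sq_nonneg (x p - x r)),
      mul_nonneg (mul_nonneg hm0.le (hx p)) (sq_nonneg (x q - x r))]
  have hfin : 3 * m ≤ c p * x p + c q * x q + c r * x r :=
    le_of_mul_le_mul_right (by linarith [key]) hposx
  linarith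
end

section
/- Let T be a rooted tree with edge set F, and define the square matrix R ∈ {−1,0,1}^{F×F} by R_{f,f} = 1, R_{f,g} = −1 if g is a child edge of f, and R_{f,g} = 0 otherwise. Then R is non-singular (det R = ±1 ≠ 0), and every column of R has L¹-norm at most 2. -/
/-- For a rooted tree with edge set `F` (edges with a parent-edge function `parent`, acyclic
as witnessed by a height function), the matrix `R` with `R_{f,f} = 1`, `R_{f,g} = -1` for
`g` a child edge of `f`, and `0` otherwise, is non-singular with `det R = ±1`, and every
column of `R` has `L¹`-norm at most `2`. -/
theorem stmt_13 {F : Type*} [Fintype F] [DecidableEq F]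
    (parent : F → Option F) (height : F → ℕ)
    (hht : ∀ f g : F, parent g = some f → height g = height f + 1)
    (R : Matrix F F ℚ)
    (hR : ∀ f g : F, R f g = if f = g then 1 else if parent g = some f then -1 else 0) :
    R.det ≠ 0 ∧ (R.det = 1 ∨ R.det = -1) ∧ ∀ g : F, ∑ f : F, |R f g| ≤ 2 := by
  have hbt : R.BlockTriangular height := by
    intro f g h
    rw [hR]
    have hne : f ≠ g := by rintro rfl; exact lt_irrefl _ h
    have hnp : parent g ≠ some f := by
      intro hp
      have := hht f g hp
      omega
    simp [hne, hnp]
  have hdet : R.det = 1 := by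
    rw [hbt.det]
    apply Finset.prod_eq_one
    intro a _
    have : R.toSquareBlock height a = 1 := by
      ext i j
      simp only [Matrix.toSquareBlock_def, Matrix.of_apply]
      rw [hR, Matrix.one_apply]
      rcases i with ⟨i, hi⟩
      rcases j with ⟨j, hj⟩
      by_cases h : i = j
      · subst h; simp
      · have hnp : parent j ≠ some i := by
          intro hp
          have := hht i j hp
          omega
        simp [h, hnp, Subtype.ext_iff]
    rw [this, Matrix.det_one]
  refine ⟨by rw [hdet]; exact one_ne_zero, Or.inl hdet, ?_⟩
  intro g
  have key : ∀ f, |R f g| ≤ (if f = g then (1:ℚ) else 0) +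
      (if parent g = some f then 1 else 0) := by
    intro f
    rw [hR]
    by_cases h : f = g
    · subst h
      by_cases hp : parent f = some f <;> simp [hp]
    · by_cases hp : parent g = some f <;> simp [h, hp]
  calc ∑ f : F, |R f g| ≤ ∑ f : F, ((if f = g then (1:ℚ) else 0) +
      (if parent g = some f then 1 else 0)) := Finset.sum_le_sum fun f _ => key f
    _ ≤ 1 + 1 := by
        rw [Finset.sum_add_distrib]
        gcongr
        · simp
        · rcases hp : parent g with _ | p
          · simp [hp]
          · simp only [hp, Option.some.injEq]
            rw [Finset.sum_ite_eq Finset.univ p (fun _ => (1:ℚ))]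
            simp
    _ = 2 := by norm_num
end

section
/- Let T be a rooted tree with root r and edge set F, let A ∈ {0,1}^{F×E} be the incidence matrix of tree edges versus the tree paths T_e for links e ∈ E, and let R be defined by R_{f,f}=1, R_{f,g}=−1 for g a child edge of f, and 0 otherwise. Then for each link e = uv with least common ancestor a, the column z of RA indexed by e satisfies: if a ∈ {u,v} (up-link), then z has entry 1 at the parent edge of the lower endpoint, entry −1 at the parent edge of a (if a ≠ r), and 0 elsewhere; if a ∉ {u,v}, then z has entry 1 at the parent edges of u and v, entry −2 at the parent edge of a (if a ≠ r), and 0 elsewhere. -/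
attribute [local instance] Classical.propDecidable

/-- `a` is a (weak) ancestor of `u` in the rooted tree given by `parent`. -/
def IsAnc {V : Type*} (parent : V → V) (a u : V) : Prop :=
  ∃ n : ℕ, parent^[n] u = a

/-- The tree edge `{f, parent f}` (for `f ≠ root`) lies on the tree path `T_{uv}` iff exactly
one of `u, v` is a descendant of `f`. -/
def OnPath {V : Type*} (parent : V → V) (f u v : V) : Prop :=
  Xor' (IsAnc parent f u) (IsAnc parent f v)

/-- `a` is the least common ancestor of `u` and `v`. -/
def IsLCA {V : Type*} (parent : V → V) (a u v : V) : Prop :=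
  IsAnc parent a u ∧ IsAnc parent a v ∧
    ∀ b : V, IsAnc parent b u → IsAnc parent b v → IsAnc parent b a

namespace Stmt14Aux

set_option linter.unusedSectionVars false

variable {V : Type*} {parent : V → V} {r : V} {depth : V → ℕ}

lemma anc_refl (u : V) : IsAnc parent u u := ⟨0, rfl⟩

lemma anc_trans {b c u : V} (h1 : IsAnc parent b c) (h2 : IsAnc parent c u) :
    IsAnc parent b u := by
  obtain ⟨m, hm⟩ := h1
  obtain ⟨n, hn⟩ := h2
  exact ⟨m + n, by rw [Function.iterate_add_apply, hn, hm]⟩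

lemma anc_parent {g u : V} (h : IsAnc parent g u) : IsAnc parent (parent g) u := by
  obtain ⟨n, hn⟩ := h
  exact ⟨n + 1, by rw [Function.iterate_succ_apply', hn]⟩

lemma anc_of_strict {x y : V} (h : IsAnc parent x y) (hne : x ≠ y) :
    IsAnc parent x (parent y) := by
  obtain ⟨n, hn⟩ := h
  cases n with
  | zero => exact absurd hn.symm hne
  | succ m => exact ⟨m, by rwa [Function.iterate_succ_apply] at hn⟩

lemma anc_total {b c u : V} (h1 : IsAnc parent b u) (h2 : IsAnc parent c u) :
    IsAnc parent b c ∨ IsAnc parent c b := by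
  obtain ⟨m, hm⟩ := h1
  obtain ⟨n, hn⟩ := h2
  rcases le_total m n with h | h
  · right
    exact ⟨n - m, by rw [← hm, ← Function.iterate_add_apply, Nat.sub_add_cancel h, hn]⟩
  · left
    exact ⟨m - n, by rw [← hn, ← Function.iterate_add_apply, Nat.sub_add_cancel h, hm]⟩

section Depth

variable (hroot : parent r = r) (hdepth : ∀ v : V, v ≠ r → depth (parent v) < depth v)

include hroot hdepth

lemma depth_parent_le (u : V) : depth (parent u) ≤ depth u := by
  by_cases h : u = r
  · subst h; rw [hroot]
  · exact (hdepth u h).le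

lemma depth_iter_le (n : ℕ) : ∀ u : V, depth (parent^[n] u) ≤ depth u := by
  induction n with
  | zero => exact fun u => le_rfl
  | succ m ih =>
      intro u
      rw [Function.iterate_succ_apply]
      exact (ih (parent u)).trans (depth_parent_le hroot hdepth u)

lemma depth_anc_le {b u : V} (h : IsAnc parent b u) : depth b ≤ depth u := by
  obtain ⟨n, hn⟩ := h
  rw [← hn]
  exact depth_iter_le hroot hdepth n u

lemma depth_anc_lt {b u : V} (h : IsAnc parent b u) (hne : b ≠ u) : depth b < depth u := by
  by_cases hur : u = r
  · subst hur
    obtain ⟨n, hn⟩ := h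
    rw [Function.iterate_fixed hroot] at hn
    exact absurd hn.symm hne
  · exact lt_of_le_of_lt (depth_anc_le hroot hdepth (anc_of_strict h hne)) (hdepth u hur)

lemma anc_antisymm {b c : V} (h1 : IsAnc parent b c) (h2 : IsAnc parent c b) : b = c := by
  by_contra hne
  exact lt_irrefl _ ((depth_anc_lt hroot hdepth h1 hne).trans
    (depth_anc_lt hroot hdepth h2 (Ne.symm hne)))

lemma not_anc_of_parent {g f : V} (hg : parent g = f) (hgr : g ≠ r) :
    ¬ IsAnc parent g f := by
  intro h
  have h1 := depth_anc_le hroot hdepth h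
  have h2 : depth f < depth g := hg ▸ hdepth g hgr
  omega

lemma child_unique {g g' f u : V} (hg : parent g = f) (hg' : parent g' = f)
    (hgr : g ≠ r) (hg'r : g' ≠ r) (h1 : IsAnc parent g u) (h2 : IsAnc parent g' u) :
    g = g' := by
  rcases anc_total h1 h2 with h | h
  · by_contra hne
    exact not_anc_of_parent hroot hdepth hg hgr (hg' ▸ anc_of_strict h hne)
  · by_contra hne
    exact not_anc_of_parent hroot hdepth hg' hg'r (hg ▸ anc_of_strict h (Ne.symm hne))

lemma childToward {f u : V} (hf : IsAnc parent f u) (hne : f ≠ u) (hfr : f ≠ r) :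
    ∃ g, parent g = f ∧ g ≠ r ∧ IsAnc parent g u := by
  obtain ⟨n, hn⟩ := hf
  cases n with
  | zero => exact absurd hn.symm hne
  | succ m =>
      refine ⟨parent^[m] u, ?_, ?_, ⟨m, rfl⟩⟩
      · rw [← Function.iterate_succ_apply' parent m u]
        exact hn
      · intro h
        apply hfr
        rw [← hn, Function.iterate_succ_apply', h, hroot]

end Depth

end Stmt14Aux

open Stmt14Aux in
/-- Structure of the columns of `R⋅A`, where `A` is the incidence matrix of tree edges versus
tree paths of links and `R` is the child-edge matrix: for a link `e = uv` with lca `a`,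
if `a ∈ {u,v}` (up-link) the column has a `1` at the parent edge of the lower endpoint and
`-1` at the parent edge of `a` (if `a ≠ r`); if `a ∉ {u,v}` it has `1` at the parent edges
of `u` and `v` and `-2` at the parent edge of `a` (if `a ≠ r`); all other entries are `0`. -/
theorem stmt_14 {V E : Type*} [Fintype V] [DecidableEq V] [Fintype E]
    (parent : V → V) (r : V) (hroot : parent r = r)
    (depth : V → ℕ) (hdepth : ∀ v : V, v ≠ r → depth (parent v) < depth v)
    (ep1 ep2 : E → V)
    (A : Matrix {f : V // f ≠ r} E ℚ)
    (hA : ∀ (f : {f : V // f ≠ r}) (e : E),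
      A f e = if OnPath parent f.1 (ep1 e) (ep2 e) then 1 else 0)
    (R : Matrix {f : V // f ≠ r} {f : V // f ≠ r} ℚ)
    (hR : ∀ f g : {f : V // f ≠ r},
      R f g = if f = g then 1 else if parent g.1 = f.1 then -1 else 0)
    (e : E) (u v a : V) (hu : ep1 e = u) (hv : ep2 e = v) (huv : u ≠ v)
    (hlca : IsLCA parent a u v) :
    (a = v → ∀ f : {f : V // f ≠ r},
      (R * A) f e = if f.1 = u then 1 else if a ≠ r ∧ f.1 = a then -1 else 0) ∧
    (a = u → ∀ f : {f : V // f ≠ r},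
      (R * A) f e = if f.1 = v then 1 else if a ≠ r ∧ f.1 = a then -1 else 0) ∧
    (a ≠ u → a ≠ v → ∀ f : {f : V // f ≠ r},
      (R * A) f e = if f.1 = u ∨ f.1 = v then 1
        else if a ≠ r ∧ f.1 = a then -2 else 0) := by
  obtain ⟨hau, hav, hmin⟩ := hlca
  have hA' : ∀ f : {f : V // f ≠ r}, A f e = if OnPath parent f.1 u v then 1 else 0 :=
    fun f => by rw [hA, hu, hv]
  have hpar_ne : ∀ f : {f : V // f ≠ r}, parent f.1 ≠ f.1 :=
    fun f h => lt_irrefl _ (h ▸ hdepth f.1 f.2)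
  have onPath_iff : ∀ w : V, OnPath parent w u v ↔
      (¬ IsAnc parent w a ∧ (IsAnc parent w u ∨ IsAnc parent w v)) := by
    intro w
    constructor
    · rintro (⟨h1, h2⟩ | ⟨h1, h2⟩)
      · exact ⟨fun hwa => h2 (anc_trans hwa hav), Or.inl h1⟩
      · exact ⟨fun hwa => h2 (anc_trans hwa hau), Or.inr h1⟩
    · rintro ⟨hna, h | h⟩
      · exact Or.inl ⟨h, fun h2 => hna (hmin w h h2)⟩
      · exact Or.inr ⟨h, fun h2 => hna (hmin w h2 h)⟩
  have key : ∀ f : {f : V // f ≠ r}, (R * A) f e =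
      (if f.1 = u ∧ a ≠ u then 1 else 0) + (if f.1 = v ∧ a ≠ v then 1 else 0)
        - (if f.1 = a ∧ a ≠ u then 1 else 0) - (if f.1 = a ∧ a ≠ v then 1 else 0) := by
    intro f
    have step1 : (R * A) f e = A f e
        - ((Finset.univ.filter (fun g : {f : V // f ≠ r} =>
            parent g.1 = f.1 ∧ OnPath parent g.1 u v)).card : ℚ) := by
      rw [Matrix.mul_apply]
      have hterm : ∀ g : {f : V // f ≠ r}, R f g * A g e =
          (if g = f then A f e else 0)
            - (if parent g.1 = f.1 ∧ OnPath parent g.1 u v then 1 else 0) := by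
        intro g
        rw [hR, hA' g]
        by_cases h1 : f = g
        · subst h1
          simp [hpar_ne f, hA' f]
        · by_cases h2 : parent g.1 = f.1
          · by_cases h3 : OnPath parent g.1 u v <;>
              simp [h1, Ne.symm h1, h2, h3]
          · by_cases h3 : OnPath parent g.1 u v <;>
              simp [h1, Ne.symm h1, h2, h3]
      rw [Finset.sum_congr rfl fun g _ => hterm g, Finset.sum_sub_distrib]
      congr 1
      · simp
      · rw [Finset.sum_boole]
    have hAfe : A f e = if OnPath parent f.1 u v then 1 else 0 := hA' f
    set S : Finset {f : V // f ≠ r} := Finset.univ.filter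
        (fun g : {f : V // f ≠ r} => parent g.1 = f.1 ∧ OnPath parent g.1 u v) with hS
    have memS : ∀ g : {f : V // f ≠ r}, g ∈ S ↔
        (parent g.1 = f.1 ∧ ¬ IsAnc parent g.1 a ∧
          (IsAnc parent g.1 u ∨ IsAnc parent g.1 v)) := by
      intro g
      simp only [hS, Finset.mem_filter, Finset.mem_univ, true_and, onPath_iff]
    by_cases hfa : IsAnc parent f.1 a
    · by_cases hfa' : f.1 = a
      · -- f is the lca edge
        have hAf0 : A f e = 0 := by
          rw [hAfe, if_neg]
          rw [onPath_iff]
          rintro ⟨hna, -⟩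
          exact hna hfa
        rcases eq_or_ne a u with hu' | hu'
        · -- a = u
          have hav' : a ≠ v := fun h => huv (hu'.symm.trans h)
          obtain ⟨gv, hgv1, hgv2, hgv3⟩ :=
            childToward hroot hdepth hav hav' (hfa' ▸ f.2)
          have hSeq : S = {⟨gv, hgv2⟩} := by
            apply Finset.eq_singleton_iff_unique_mem.mpr
            constructor
            · rw [memS]
              exact ⟨hgv1.trans hfa'.symm,
                not_anc_of_parent hroot hdepth hgv1 hgv2, Or.inr hgv3⟩
            · intro g hg
              rw [memS] at hg
              obtain ⟨hp, hna, hgu | hgv'⟩ := hg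
              · exact absurd (hu'.symm ▸ hgu) hna
              · exact Subtype.ext
                  (child_unique hroot hdepth (hp.trans hfa') hgv1 g.2 hgv2 hgv' hgv3)
          rw [step1, hSeq, hAf0]
          simp [hfa', hu', hav', huv]
        · rcases eq_or_ne a v with hv' | hv'
          · -- a = v
            obtain ⟨gu, hgu1, hgu2, hgu3⟩ :=
              childToward hroot hdepth hau hu' (hfa' ▸ f.2)
            have hSeq : S = {⟨gu, hgu2⟩} := by
              apply Finset.eq_singleton_iff_unique_mem.mpr
              constructor
              · rw [memS]
                exact ⟨hgu1.trans hfa'.symm,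
                  not_anc_of_parent hroot hdepth hgu1 hgu2, Or.inl hgu3⟩
              · intro g hg
                rw [memS] at hg
                obtain ⟨hp, hna, hgu' | hgv⟩ := hg
                · exact Subtype.ext
                    (child_unique hroot hdepth (hp.trans hfa') hgu1 g.2 hgu2 hgu' hgu3)
                · exact absurd (hv'.symm ▸ hgv) hna
            rw [step1, hSeq, hAf0]
            simp [hfa', hv', hu', Ne.symm huv]
          · -- a ≠ u, a ≠ v : two children
            obtain ⟨gu, hgu1, hgu2, hgu3⟩ :=
              childToward hroot hdepth hau hu' (hfa' ▸ f.2)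
            obtain ⟨gv, hgv1, hgv2, hgv3⟩ :=
              childToward hroot hdepth hav hv' (hfa' ▸ f.2)
            have hne' : (⟨gu, hgu2⟩ : {f : V // f ≠ r}) ≠ ⟨gv, hgv2⟩ := by
              intro h
              have h2 : gu = gv := congrArg Subtype.val h
              subst h2
              exact not_anc_of_parent hroot hdepth hgu1 hgu2 (hmin gu hgu3 hgv3)
            have hSeq : S = {⟨gu, hgu2⟩, ⟨gv, hgv2⟩} := by
              ext g
              rw [memS, Finset.mem_insert, Finset.mem_singleton]
              constructor
              · rintro ⟨hp, hna, h | h⟩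
                · exact Or.inl (Subtype.ext
                    (child_unique hroot hdepth (hp.trans hfa') hgu1 g.2 hgu2 h hgu3))
                · exact Or.inr (Subtype.ext
                    (child_unique hroot hdepth (hp.trans hfa') hgv1 g.2 hgv2 h hgv3))
              · rintro (rfl | rfl)
                · exact ⟨hgu1.trans hfa'.symm,
                    not_anc_of_parent hroot hdepth hgu1 hgu2, Or.inl hgu3⟩
                · exact ⟨hgv1.trans hfa'.symm,
                    not_anc_of_parent hroot hdepth hgv1 hgv2, Or.inr hgv3⟩
            rw [step1, hSeq, hAf0, Finset.card_pair hne']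
            have hau' : f.1 ≠ u := fun h => hu' (hfa'.symm.trans h)
            have hav' : f.1 ≠ v := fun h => hv' (hfa'.symm.trans h)
            simp [hfa', hu', hv', hau', hav']
            norm_num
      · -- f a strict ancestor of a
        have hAf0 : A f e = 0 := by
          rw [hAfe, if_neg]
          rw [onPath_iff]
          rintro ⟨hna, -⟩
          exact hna hfa
        have hSempty : S = ∅ := by
          rw [Finset.eq_empty_iff_forall_notMem]
          intro g hg
          rw [memS] at hg
          obtain ⟨hp, hna, hcase⟩ := hg
          have hgw : IsAnc parent a g.1 → False := by
            intro h
            have hag : a ≠ g.1 := fun he => hna ⟨0, he⟩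
            have h2 : IsAnc parent a (parent g.1) := anc_of_strict h hag
            rw [hp] at h2
            exact hfa' (anc_antisymm hroot hdepth hfa h2)
          rcases hcase with h | h
          · rcases anc_total h hau with h1 | h1
            · exact hna h1
            · exact hgw h1
          · rcases anc_total h hav with h1 | h1
            · exact hna h1
            · exact hgw h1
        have hfu : f.1 ≠ u := fun he =>
          hfa' (anc_antisymm hroot hdepth hfa (he.symm ▸ hau))
        have hfv : f.1 ≠ v := fun he =>
          hfa' (anc_antisymm hroot hdepth hfa (he.symm ▸ hav))
        rw [step1, hSempty, hAf0]
        simp [hfu, hfv, hfa']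
    · -- f not an ancestor of a
      have hfa'' : f.1 ≠ a := fun he => hfa ⟨0, he.symm⟩
      by_cases hfu : IsAnc parent f.1 u
      · have hfv : ¬ IsAnc parent f.1 v := fun h => hfa (hmin f.1 hfu h)
        have hfvne : f.1 ≠ v := fun he => hfv ⟨0, he.symm⟩
        have hAf1 : A f e = 1 := by
          rw [hAfe, if_pos]
          rw [onPath_iff]
          exact ⟨hfa, Or.inl hfu⟩
        by_cases hfu' : f.1 = u
        · have hSempty : S = ∅ := by
            rw [Finset.eq_empty_iff_forall_notMem]
            intro g hg
            rw [memS] at hg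
            obtain ⟨hp, hna, h | h⟩ := hg
            · exact not_anc_of_parent hroot hdepth hp g.2 (hfu'.symm ▸ h)
            · exact hfv (hp ▸ anc_parent h)
          have hau' : a ≠ u := fun h => hfa'' (hfu'.trans h.symm)
          rw [step1, hSempty, hAf1]
          simp [hfu', hau', Ne.symm hau', hfvne, hfa'', huv]
        · obtain ⟨gu, hgu1, hgu2, hgu3⟩ := childToward hroot hdepth hfu hfu' f.2
          have hSeq : S = {⟨gu, hgu2⟩} := by
            apply Finset.eq_singleton_iff_unique_mem.mpr
            constructor
            · rw [memS]
              exact ⟨hgu1, fun h => hfa (hgu1 ▸ anc_parent h), Or.inl hgu3⟩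
            · intro g hg
              rw [memS] at hg
              obtain ⟨hp, hna, h | h⟩ := hg
              · exact Subtype.ext (child_unique hroot hdepth hp hgu1 g.2 hgu2 h hgu3)
              · exact absurd (hp ▸ anc_parent h) hfv
          rw [step1, hSeq, hAf1]
          simp [hfu', hfvne, hfa'']
      · by_cases hfv : IsAnc parent f.1 v
        · have hfune : f.1 ≠ u := fun he => hfu ⟨0, he.symm⟩
          have hAf1 : A f e = 1 := by
            rw [hAfe, if_pos]
            rw [onPath_iff]
            exact ⟨hfa, Or.inr hfv⟩
          by_cases hfv' : f.1 = v
          · have hSempty : S = ∅ := by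
              rw [Finset.eq_empty_iff_forall_notMem]
              intro g hg
              rw [memS] at hg
              obtain ⟨hp, hna, h | h⟩ := hg
              · exact hfu (hp ▸ anc_parent h)
              · exact not_anc_of_parent hroot hdepth hp g.2 (hfv'.symm ▸ h)
            have hav' : a ≠ v := fun h => hfa'' (hfv'.trans h.symm)
            rw [step1, hSempty, hAf1]
            simp [hfv', hav', Ne.symm hav', hfune, hfa'', Ne.symm huv]
          · obtain ⟨gv, hgv1, hgv2, hgv3⟩ := childToward hroot hdepth hfv hfv' f.2
            have hSeq : S = {⟨gv, hgv2⟩} := by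
              apply Finset.eq_singleton_iff_unique_mem.mpr
              constructor
              · rw [memS]
                exact ⟨hgv1, fun h => hfa (hgv1 ▸ anc_parent h), Or.inr hgv3⟩
              · intro g hg
                rw [memS] at hg
                obtain ⟨hp, hna, h | h⟩ := hg
                · exact absurd (hp ▸ anc_parent h) hfu
                · exact Subtype.ext (child_unique hroot hdepth hp hgv1 g.2 hgv2 h hgv3)
            rw [step1, hSeq, hAf1]
            simp [hfv', hfune, hfa'']
        · -- neither
          have hfune : f.1 ≠ u := fun he => hfu ⟨0, he.symm⟩
          have hfvne : f.1 ≠ v := fun he => hfv ⟨0, he.symm⟩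
          have hAf0 : A f e = 0 := by
            rw [hAfe, if_neg]
            rw [onPath_iff]
            rintro ⟨-, h | h⟩
            · exact hfu h
            · exact hfv h
          have hSempty : S = ∅ := by
            rw [Finset.eq_empty_iff_forall_notMem]
            intro g hg
            rw [memS] at hg
            obtain ⟨hp, hna, h | h⟩ := hg
            · exact hfu (hp ▸ anc_parent h)
            · exact hfv (hp ▸ anc_parent h)
          rw [step1, hSempty, hAf0]
          simp [hfune, hfvne, hfa'']
  refine ⟨?_, ?_, ?_⟩
  · intro hva f
    rw [key f]
    subst hva
    rcases eq_or_ne f.1 u with hfu | hfu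
    · simp [hfu, huv, Ne.symm huv]
    · rcases eq_or_ne f.1 a with hfv | hfv
      · have har : a ≠ r := hfv ▸ f.2
        simp [hfu, hfv, har, Ne.symm huv]
      · simp [hfu, hfv]
  · intro hva f
    rw [key f]
    subst hva
    rcases eq_or_ne f.1 v with hfv | hfv
    · simp [hfv, huv, Ne.symm huv]
    · rcases eq_or_ne f.1 a with hfu | hfu
      · have har : a ≠ r := hfu ▸ f.2
        simp [hfu, hfv, har, huv]
      · simp [hfu, hfv]
  · intro hau' hav' f
    rw [key f]
    rcases eq_or_ne f.1 u with hfu | hfu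
    · have : f.1 ≠ a := fun h => hau' (h.symm.trans hfu)
      simp [hfu, hau', hav', Ne.symm hau', Ne.symm hav', this, huv]
    · rcases eq_or_ne f.1 v with hfv | hfv
      · have : f.1 ≠ a := fun h => hav' (h.symm.trans hfv)
        simp [hfu, hfv, hau', hav', Ne.symm hau', Ne.symm hav', this, Ne.symm huv]
      · rcases eq_or_ne f.1 a with hfa | hfa
        · have har : a ≠ r := hfa ▸ f.2
          simp [hfu, hfv, hfa, hau', hav', har]
          norm_num
        · simp [hfu, hfv, hfa]
end

section
/- Let x ∈ R^E satisfy x(δ(v)) ≥ 1 for every leaf v of a subtree Ŝ with at least k leaves, let c_e ≥ 1 for all e, and let f be the parent tree-edge of Ŝ with Σ_{e∈ψ(f)} c_e x_e ≤ λM. Then 2·Σ_{e∈γ(Ŝ)} c_e x_e ≥ k − λM, where γ(Ŝ) is the set of links with both endpoints in Ŝ. -/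
/-- Counting argument: if `x(δ(v)) ≥ 1` for each of at least `k` leaves of a subtree with node
set `S`, all costs are at least `1`, every link leaving `S` covers the parent tree-edge `f`
(i.e. lies in `ψ(f) = psi`), and the fractional cost of `ψ(f)` is at most `λM`, then
`2 ∑_{e ∈ γ(S)} c_e x_e ≥ k - λM`, where `γ(S)` is the set of links with both ends in `S`. -/
theorem stmt_18 {V E : Type*} [Fintype E] [DecidableEq V] [DecidableEq E]
    (ep1 ep2 : E → V) (S Lvs : Finset V) (hLS : Lvs ⊆ S)
    (k : ℕ) (hk : k ≤ Lvs.card)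
    (x cst : E → ℝ) (hx : ∀ e, 0 ≤ x e) (hc : ∀ e, 1 ≤ cst e)
    (psi : Finset E)
    (hpsi : ∀ e : E, ¬ (ep1 e ∈ S ↔ ep2 e ∈ S) → e ∈ psi)
    (lam M : ℝ)
    (hpsiB : ∑ e ∈ psi, cst e * x e ≤ lam * M)
    (hleaf : ∀ v ∈ Lvs,
      (1 : ℝ) ≤ ∑ e ∈ Finset.univ.filter (fun e => ep1 e = v ∨ ep2 e = v), x e) :
    (k : ℝ) - lam * M ≤
      2 * ∑ e ∈ Finset.univ.filter (fun e => ep1 e ∈ S ∧ ep2 e ∈ S), cst e * x e := by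
  have hcx : ∀ e, 0 ≤ cst e * x e := fun e =>
    mul_nonneg (le_trans zero_le_one (hc e)) (hx e)
  have hxc : ∀ e, x e ≤ cst e * x e := fun e => by
    nlinarith [hc e, hx e]
  -- step 1 : k ≤ sum of leaf degrees
  have key : (k : ℝ) ≤ ∑ v ∈ Lvs, ∑ e ∈ Finset.univ.filter (fun e => ep1 e = v ∨ ep2 e = v), x e :=
    calc (k : ℝ) ≤ (Lvs.card : ℝ) := by exact_mod_cast hk
    _ = ∑ v ∈ Lvs, (1 : ℝ) := by simp
    _ ≤ _ := Finset.sum_le_sum hleaf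
  -- step 2 : swap the sums
  have swap : ∑ v ∈ Lvs, ∑ e ∈ Finset.univ.filter (fun e => ep1 e = v ∨ ep2 e = v), x e
      = ∑ e : E, ((Lvs.filter (fun v => ep1 e = v ∨ ep2 e = v)).card : ℝ) * x e := by
    have : ∀ v ∈ Lvs, ∑ e ∈ Finset.univ.filter (fun e => ep1 e = v ∨ ep2 e = v), x e
        = ∑ e : E, if ep1 e = v ∨ ep2 e = v then x e else 0 := by
      intro v _
      rw [Finset.sum_filter]
    rw [Finset.sum_congr rfl this, Finset.sum_comm]
    refine Finset.sum_congr rfl fun e _ => ?_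
    rw [← Finset.sum_filter, Finset.sum_const, nsmul_eq_mul]
  -- step 3 : pointwise bound
  have ptwise : ∀ e : E, ((Lvs.filter (fun v => ep1 e = v ∨ ep2 e = v)).card : ℝ) * x e
      ≤ 2 * (if ep1 e ∈ S ∧ ep2 e ∈ S then cst e * x e else 0)
        + (if e ∈ psi then cst e * x e else 0) := by
    intro e
    set T := Lvs.filter (fun v => ep1 e = v ∨ ep2 e = v) with hT
    have hT2 : T.card ≤ 2 := by
      have : T ⊆ {ep1 e, ep2 e} := by
        intro v hv
        simp only [hT, Finset.mem_filter] at hv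
        rcases hv.2 with h | h <;> simp [h.symm]
      calc T.card ≤ ({ep1 e, ep2 e} : Finset V).card := Finset.card_le_card this
        _ ≤ 2 := Finset.card_insert_le _ _ |>.trans (by simp)
    by_cases hS : ep1 e ∈ S ∧ ep2 e ∈ S
    · have h1 : ((T.card : ℝ)) * x e ≤ 2 * (cst e * x e) := by
        have : ((T.card : ℝ)) ≤ 2 := by exact_mod_cast hT2
        nlinarith [hx e, hxc e]
      rw [if_pos hS]
      have : (0:ℝ) ≤ if e ∈ psi then cst e * x e else 0 := by
        by_cases hp : e ∈ psi <;> simp [hp, hcx e]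
      linarith
    · rw [if_neg hS]
      by_cases hiff : ep1 e ∈ S ↔ ep2 e ∈ S
      · -- neither endpoint in S
        have h1 : ep1 e ∉ S ∧ ep2 e ∉ S := by tauto
        have hT0 : T = ∅ := by
          apply Finset.eq_empty_of_forall_notMem
          intro v hv
          simp only [hT, Finset.mem_filter] at hv
          rcases hv.2 with h | h
          · exact h1.1 (h ▸ hLS hv.1)
          · exact h1.2 (h ▸ hLS hv.1)
        rw [hT0]
        simp only [Finset.card_empty, Nat.cast_zero, zero_mul, mul_zero, zero_add]
        by_cases hp : e ∈ psi <;> simp [hp, hcx e]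
      · -- exactly one endpoint in S; e ∈ psi and at most one leaf endpoint
        have hep : e ∈ psi := hpsi e hiff
        have hT1 : T.card ≤ 1 := by
          rcases not_iff.mp hiff |>.mp with _
          by_cases h1 : ep1 e ∈ S
          · have h2 : ep2 e ∉ S := by tauto
            have : T ⊆ {ep1 e} := by
              intro v hv
              simp only [hT, Finset.mem_filter] at hv
              rcases hv.2 with h | h
              · simp [h.symm]
              · exact absurd (h ▸ hLS hv.1) h2
            simpa using Finset.card_le_card this
          · have h2 : ep2 e ∈ S := by tauto
            have : T ⊆ {ep2 e} := by
              intro v hv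
              simp only [hT, Finset.mem_filter] at hv
              rcases hv.2 with h | h
              · exact absurd (h ▸ hLS hv.1) h1
              · simp [h.symm]
            simpa using Finset.card_le_card this
        have : ((T.card : ℝ)) ≤ 1 := by exact_mod_cast hT1
        rw [if_pos hep, mul_zero, zero_add]
        nlinarith [hx e, hxc e]
  -- step 4 : sum the pointwise bounds
  have main : (k : ℝ) ≤ 2 * (∑ e ∈ Finset.univ.filter (fun e => ep1 e ∈ S ∧ ep2 e ∈ S), cst e * x e)
      + ∑ e ∈ psi, cst e * x e := by
    calc (k : ℝ) ≤ ∑ e : E, ((Lvs.filter (fun v => ep1 e = v ∨ ep2 e = v)).card : ℝ) * x e := by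
          rw [← swap]; exact key
      _ ≤ ∑ e : E, (2 * (if ep1 e ∈ S ∧ ep2 e ∈ S then cst e * x e else 0)
            + (if e ∈ psi then cst e * x e else 0)) := Finset.sum_le_sum fun e _ => ptwise e
      _ = _ := by
          rw [Finset.sum_add_distrib, ← Finset.mul_sum, ← Finset.sum_filter,
            ← Finset.sum_filter, Finset.filter_mem_eq_inter, Finset.univ_inter]
  linarith
end
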